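/- arXiv:1805.00422 — 2 statements merged into one kernel-verified Lean document; each statement's English description precedes it below -/
import Mathlib

section
/- Suppose α and β are smooth functions on an interval and under a reparametrization t̃ = g(t) with g' > 0 they transform as α̃(g(t)) = g'(t)⁻²(α(t) − 2S(g)(t)) and β̃(g(t)) = g'(t)⁻⁴(β(t) − 4S(g)(t)α(t) + 4S(g)(t)²). Then the quantity Φ := β − α² transforms as Φ̃(g(t)) = g'(t)⁻⁴·Φ(t), i.e., Φ is a relative invariant of weight 4. -/
/-- The Schwarzian derivative `S(f) = f'''/f' - (3/2)(f''/f')²`. -/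
noncomputable def schwarzian (f : ℝ → ℝ) (t : ℝ) : ℝ :=
  iteratedDeriv 3 f t / deriv f t - (3/2) * (iteratedDeriv 2 f t / deriv f t) ^ 2

/-- If `α̃∘g = g'⁻²(α − 2S(g))` and `β̃∘g = g'⁻⁴(β − 4S(g)α + 4S(g)²)`, then
`Φ := β − α²` is a relative invariant of weight 4: `Φ̃∘g = g'⁻⁴·Φ`. -/
theorem phi_relative_invariant (g α β αt βt : ℝ → ℝ)
    (hg : ContDiff ℝ (⊤ : ℕ∞) g) (hg' : ∀ t, 0 < deriv g t)
    (hα : ContDiff ℝ (⊤ : ℕ∞) α) (hβ : ContDiff ℝ (⊤ : ℕ∞) β)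
    (hαt : ∀ t, αt (g t) = ((deriv g t) ^ 2)⁻¹ * (α t - 2 * schwarzian g t))
    (hβt : ∀ t, βt (g t) = ((deriv g t) ^ 4)⁻¹ *
      (β t - 4 * schwarzian g t * α t + 4 * (schwarzian g t) ^ 2)) :
    ∀ t, βt (g t) - (αt (g t)) ^ 2 = ((deriv g t) ^ 4)⁻¹ * (β t - (α t) ^ 2) := by
  intro t
  have hne : deriv g t ≠ 0 := (hg' t).ne'
  rw [hαt, hβt]
  field_simp
  ring
end

section
/- For a smooth relative invariant Q of weight 1, i.e., Q̃(g(t)) = g'(t)⁻¹Q(t), the combination 2QQ'' − 3(Q')² transforms as 2Q̃Q̃'' − 3(Q̃')² evaluated at g(t) equals g'(t)⁻⁴(2QQ'' − 3(Q')² − 2S(g)Q²)(t). -/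
/-- For a relative invariant `Q` of weight 1 (`Q̃∘g = g'⁻¹·Q`), the combination
`2QQ'' − 3(Q')²` transforms as
`(2Q̃Q̃'' − 3(Q̃')²)∘g = g'⁻⁴(2QQ'' − 3(Q')² − 2S(g)Q²)`. -/
theorem QQ_combination_transform (g Q Qt : ℝ → ℝ)
    (hg : ContDiff ℝ (⊤ : ℕ∞) g) (hg' : ∀ t, 0 < deriv g t)
    (hQs : ContDiff ℝ (⊤ : ℕ∞) Q) (hQts : ContDiff ℝ (⊤ : ℕ∞) Qt)
    (hQ : ∀ t, Qt (g t) = (deriv g t)⁻¹ * Q t) :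
    ∀ t,
      2 * Qt (g t) * deriv (deriv Qt) (g t) - 3 * (deriv Qt (g t)) ^ 2 =
        ((deriv g t) ^ 4)⁻¹ *
          (2 * Q t * deriv (deriv Q) t - 3 * (deriv Q t) ^ 2
            - 2 * schwarzian g t * (Q t) ^ 2) := by
  have hg1 : Differentiable ℝ g := hg.differentiable (by simp)
  have hgi : ContDiff ℝ (↑(⊤ : ℕ∞)) g := hg.of_le (by simp)
  have hQi : ContDiff ℝ (↑(⊤ : ℕ∞)) Q := hQs.of_le (by simp)
  have hQti : ContDiff ℝ (↑(⊤ : ℕ∞)) Qt := hQts.of_le (by simp)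
  have hga : ContDiff ℝ (↑(⊤ : ℕ∞)) (deriv g) := (contDiff_infty_iff_deriv.mp hgi).2
  have hga1 : Differentiable ℝ (deriv g) := hga.differentiable (by simp)
  have hgb1 : Differentiable ℝ (deriv (deriv g)) :=
    ((contDiff_infty_iff_deriv.mp hga).2).differentiable (by simp)
  have hQ1 : Differentiable ℝ Q := hQs.differentiable (by simp)
  have hQa1 : Differentiable ℝ (deriv Q) :=
    ((contDiff_infty_iff_deriv.mp hQi).2).differentiable (by simp)
  have hQt1 : Differentiable ℝ Qt := hQts.differentiable (by simp)
  have hQta1 : Differentiable ℝ (deriv Qt) :=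
    ((contDiff_infty_iff_deriv.mp hQti).2).differentiable (by simp)
  have hane : ∀ t, deriv g t ≠ 0 := fun t => (hg' t).ne'
  have h1 : ∀ t, deriv Qt (g t) =
      (deriv Q t * deriv g t - deriv (deriv g) t * Q t) / (deriv g t) ^ 3 := by
    intro t
    have hL : HasDerivAt (fun s => Qt (g s)) (deriv Qt (g t) * deriv g t) t :=
      ((hQt1 (g t)).hasDerivAt).comp t (hg1 t).hasDerivAt
    have hR : HasDerivAt (fun s => (deriv g s)⁻¹ * Q s)
        (-deriv (deriv g) t / (deriv g t) ^ 2 * Q t + (deriv g t)⁻¹ * deriv Q t) t :=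
      (((hga1 t).hasDerivAt).inv (hane t)).mul (hQ1 t).hasDerivAt
    have hfun : (fun s => Qt (g s)) = fun s => (deriv g s)⁻¹ * Q s := funext hQ
    have heq := hL.unique (hfun ▸ hR)
    have ha := hane t
    field_simp at heq
    rw [eq_div_iff (pow_ne_zero 3 ha)]
    apply mul_left_cancel₀ ha
    linear_combination deriv g t * heq
  have h2 : ∀ t, deriv (deriv Qt) (g t) * deriv g t =
      ((deriv (deriv Q) t * deriv g t + deriv Q t * deriv (deriv g) t
          - (deriv (deriv (deriv g)) t * Q t + deriv (deriv g) t * deriv Q t))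
          * (deriv g t) ^ 3
        - (deriv Q t * deriv g t - deriv (deriv g) t * Q t)
          * (3 * (deriv g t) ^ 2 * deriv (deriv g) t))
        / ((deriv g t) ^ 3) ^ 2 := by
    intro t
    have hgc1 : Differentiable ℝ (deriv (deriv (deriv g))) :=
      ((contDiff_infty_iff_deriv.mp ((contDiff_infty_iff_deriv.mp hga).2)).2).differentiable (by simp)
    have hL : HasDerivAt (fun s => deriv Qt (g s)) (deriv (deriv Qt) (g t) * deriv g t) t :=
      ((hQta1 (g t)).hasDerivAt).comp t (hg1 t).hasDerivAt
    have hN : HasDerivAt (fun s => deriv Q s * deriv g s - deriv (deriv g) s * Q s)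
        (deriv (deriv Q) t * deriv g t + deriv Q t * deriv (deriv g) t
          - (deriv (deriv (deriv g)) t * Q t + deriv (deriv g) t * deriv Q t)) t :=
      (((hQa1 t).hasDerivAt).mul (hga1 t).hasDerivAt).sub
        (((hgb1 t).hasDerivAt).mul (hQ1 t).hasDerivAt)
    have hD : HasDerivAt (fun s => (deriv g s) ^ 3)
        (3 * (deriv g t) ^ 2 * deriv (deriv g) t) t := by
      have := ((hga1 t).hasDerivAt).fun_pow 3
      simpa using this
    have hR : HasDerivAt
        (fun s => (deriv Q s * deriv g s - deriv (deriv g) s * Q s) / (deriv g s) ^ 3)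
        (((deriv (deriv Q) t * deriv g t + deriv Q t * deriv (deriv g) t
          - (deriv (deriv (deriv g)) t * Q t + deriv (deriv g) t * deriv Q t))
          * (deriv g t) ^ 3
        - (deriv Q t * deriv g t - deriv (deriv g) t * Q t)
          * (3 * (deriv g t) ^ 2 * deriv (deriv g) t))
        / ((deriv g t) ^ 3) ^ 2) t :=
      hN.div hD (pow_ne_zero 3 (hane t))
    have hfun : (fun s => deriv Qt (g s)) =
        fun s => (deriv Q s * deriv g s - deriv (deriv g) s * Q s) / (deriv g s) ^ 3 :=
      funext h1
    exact hL.unique (hfun ▸ hR)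
  intro t
  have ha := hane t
  have h2t := h2 t
  rw [hQ t, h1 t]
  have h2' : deriv (deriv Qt) (g t) =
      (((deriv (deriv Q) t * deriv g t + deriv Q t * deriv (deriv g) t
          - (deriv (deriv (deriv g)) t * Q t + deriv (deriv g) t * deriv Q t))
          * (deriv g t) ^ 3
        - (deriv Q t * deriv g t - deriv (deriv g) t * Q t)
          * (3 * (deriv g t) ^ 2 * deriv (deriv g) t))
        / ((deriv g t) ^ 3) ^ 2) / deriv g t := by
    exact (eq_div_iff ha).mpr h2t
  rw [h2']
  simp only [schwarzian, iteratedDeriv_succ, iteratedDeriv_zero]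
  field_simp
  ring
end
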